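/- Let m ≥ 1 and let A, B, C be m×m matrices over F₂ such that the digital net generated by (A, B, C) is a (0,m,3)-net over F₂. Let a_i, b_i, c_i denote the i-th rows of A, B, C respectively, and for integers i, j ≥ 0 with i+j ≤ m−1 let V_{i,j} be the F₂-subspace of F₂^m spanned by a_1,…,a_i, b_1,…,b_{m−i−j−1}, c_1,…,c_j. Then for all integers 1 ≤ k ≤ m−j and 0 ≤ i_1 < i_2 < … < i_k ≤ m−1−j, the subspace ⋂_{l=1}^k V_{i_l, j} has dimension m−k over F₂. -/

import Mathlib

open Matrix

/-- The vector of binary digits of `l` (least significant first). -/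
def digitsVec (m l : ℕ) : Fin m → ZMod 2 := fun k => if l.testBit k.val then 1 else 0

/-- The map φ sending a bit vector to a real number in [0,1). -/
noncomputable def phiMap (m : ℕ) (y : Fin m → ZMod 2) : ℝ :=
  ∑ k : Fin m, ((y k).val : ℝ) / 2 ^ (k.val + 1)

/-- The digital net (as a multiset of `2^m` points in `[0,1)^s`) generated by
matrices `C 0, …, C (s-1)`. -/
noncomputable def digitalNet (m s : ℕ) (C : Fin s → Matrix (Fin m) (Fin m) (ZMod 2)) :
    Multiset (Fin s → ℝ) :=
  (Multiset.range (2 ^ m)).map fun l => fun j => phiMap m ((C j).mulVec (digitsVec m l))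

open Classical in
/-- `P` is a `(t,m,s)`-net over `F₂`: every elementary interval of volume `2^{t-m}`
contains exactly `2^t` points of `P`, counted with multiplicity. -/
def IsNet (t m s : ℕ) (P : Multiset (Fin s → ℝ)) : Prop :=
  ∀ d : Fin s → ℕ, (∑ i, d i) = m - t →
    ∀ a : Fin s → ℕ, (∀ i, a i < 2 ^ d i) →
      (P.countP fun x => ∀ i,
        ((a i : ℝ) / 2 ^ d i ≤ x i ∧ x i < ((a i : ℝ) + 1) / 2 ^ d i)) = 2 ^ t

/-- The anti-diagonal matrix `J_m` over `F₂`. -/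
def Jmat (m : ℕ) : Matrix (Fin m) (Fin m) (ZMod 2) :=
  Matrix.of fun i j => if i.val + j.val = m - 1 then 1 else 0

/-- The upper-triangular Pascal matrix `P_m` over `F₂` (0-indexed entry `(i,j)` is
`binom(j,i) mod 2`). -/
def Pmat (m : ℕ) : Matrix (Fin m) (Fin m) (ZMod 2) :=
  Matrix.of fun i j => ((j.val.choose i.val : ℕ) : ZMod 2)

/-- A matrix is lower triangular. -/
def IsLowerTri {m : ℕ} (L : Matrix (Fin m) (Fin m) (ZMod 2)) : Prop :=
  ∀ i j : Fin m, i < j → L i j = 0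

/-- The set consisting of the first `n` rows of `M`. -/
def rowSet {m : ℕ} (M : Matrix (Fin m) (Fin m) (ZMod 2)) (n : ℕ) :
    Set (Fin m → ZMod 2) :=
  {x | ∃ r : Fin m, r.val < n ∧ x = M r}

/-- The subspace `V_{i,j}` spanned by the first `i` rows of `A`, the first
`m−i−j−1` rows of `B` and the first `j` rows of `C`. -/
def Vsub {m : ℕ} (A B C : Matrix (Fin m) (Fin m) (ZMod 2)) (i j : ℕ) :
    Submodule (ZMod 2) (Fin m → ZMod 2) :=
  Submodule.span (ZMod 2) (rowSet A i ∪ rowSet B (m - i - j - 1) ∪ rowSet C j)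


/-! A vector orthogonal to the first `d₁` rows of `A`, `d₂` rows of `B` and `d₃` rows of `C`
(`d₁ + d₂ + d₃ = m`) is the digit vector of a point of the net in the elementary box
`∏ [0, 2^{-dᵢ})`, which already contains the point `x₀ = 0`; since a `(0,m,3)`-net puts only
one point there, these `m` rows span `F₂^m`. Hence `V_{i,j}`, spanned by the same rows minus
`b_{m-i-j}`, is a hyperplane not containing `b_{m-i-j}`, whereas `b_{m-i-j} ∈ V_{i',j}` for
`i' < i`. Intersecting the hyperplanes `V_{i_l,j}` in increasing order of `i_l`, each new one is
transversal to the intersection so far and lowers its dimension by exactly one. -/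

open Finset Submodule Module

section Digits

variable {m : ℕ}

lemma phiMap_nonneg (y : Fin m → ZMod 2) : 0 ≤ phiMap m y :=
  Finset.sum_nonneg fun _ _ => by positivity

lemma phiMap_lt_of_forall_lt_eq_zero {y : Fin m → ZMod 2} {d : ℕ}
    (hy : ∀ t : Fin m, t.val < d → y t = 0) : phiMap m y < 1 / 2 ^ d := by
  have hterm : ∀ k : Fin m, ((y k).val : ℝ) / 2 ^ (k.val + 1)
      ≤ if d ≤ k.val then (1 / 2 : ℝ) ^ (k.val + 1) else 0 := by
    intro k
    split_ifs with hk
    · rw [div_pow, one_pow]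
      gcongr
      exact_mod_cast Nat.le_of_lt_succ (y k).val_lt
    · simp [hy k (not_le.1 hk)]
  calc phiMap m y
      ≤ ∑ k : Fin m, if d ≤ k.val then (1 / 2 : ℝ) ^ (k.val + 1) else 0 :=
        sum_le_sum fun k _ => hterm k
    _ = ∑ k ∈ Ico d m, (1 / 2 : ℝ) ^ (k + 1) := by
      rw [Fin.sum_univ_eq_sum_range (fun k => if d ≤ k then (1 / 2 : ℝ) ^ (k + 1) else 0),
        ← sum_filter]
      congr 1
      ext k
      simp only [mem_filter, mem_range, mem_Ico]
      omega
    _ < 1 / 2 ^ d := by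
      rcases le_or_gt d m with hdm | hdm
      · have hgeom :
            ∑ k ∈ Ico d m, (1 / 2 : ℝ) ^ (k + 1) = (1 / 2) ^ d - (1 / 2) ^ m := by
          simp_rw [pow_succ, ← sum_mul, geom_sum_Ico' (by norm_num : (1 / 2 : ℝ) ≠ 1) hdm]
          ring
        have : (0 : ℝ) < (1 / 2) ^ m := by positivity
        rw [hgeom, div_pow, one_pow]
        linarith
      · rw [Ico_eq_empty (by omega), sum_empty]
        positivity

lemma digitsVec_zero : digitsVec m 0 = 0 := by
  ext k
  simp [digitsVec]

lemma digitsVec_injOn {l l' : ℕ} (hl : l < 2 ^ m) (hl' : l' < 2 ^ m)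
    (h : digitsVec m l = digitsVec m l') : l = l' := by
  refine Nat.eq_of_testBit_eq fun k => ?_
  rcases Nat.lt_or_ge k m with hk | hk
  · have := congrFun h ⟨k, hk⟩
    simp only [digitsVec] at this
    by_cases h1 : l.testBit k <;> by_cases h2 : l'.testBit k <;> simp_all
  · have h2m : 2 ^ m ≤ 2 ^ k := Nat.pow_le_pow_right (by norm_num) hk
    rw [Nat.testBit_eq_false_of_lt (hl.trans_le h2m), Nat.testBit_eq_false_of_lt (hl'.trans_le h2m)]

lemma digitsVec_surjective (v : Fin m → ZMod 2) : ∃ l < 2 ^ m, digitsVec m l = v := by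
  have hinj : Function.Injective fun l : Fin (2 ^ m) => digitsVec m l :=
    fun l l' h => Fin.ext (digitsVec_injOn l.isLt l'.isLt h)
  obtain ⟨l, rfl⟩ := ((Fintype.bijective_iff_injective_and_card _).2
    ⟨hinj, by simp [ZMod.card]⟩).2 v
  exact ⟨l, l.isLt, rfl⟩

end Digits

lemma one_lt_countP_range {N a b : ℕ} {p : ℕ → Prop} [DecidablePred p] (hab : a ≠ b)
    (ha : a < N) (hb : b < N) (hpa : p a) (hpb : p b) :
    1 < (Multiset.range N).countP p := by
  rw [← Finset.range_val, Multiset.countP_eq_card_filter, ← Finset.filter_val, Finset.card_val]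
  exact one_lt_card.2 ⟨a, by simp [ha, hpa], b, by simp [hb, hpb], hab⟩

section Net

variable {m s : ℕ} {C : Fin s → Matrix (Fin m) (Fin m) (ZMod 2)}

theorem IsNet.eq_zero_of_mulVec_apply_eq_zero (hnet : IsNet 0 m s (digitalNet m s C))
    {d : Fin s → ℕ} (hd : ∑ i, d i = m) {v : Fin m → ZMod 2}
    (hv : ∀ i (t : Fin m), t.val < d i → (C i *ᵥ v) t = 0) : v = 0 := by
  classical
  by_contra hv0
  obtain ⟨l, hl, rfl⟩ := digitsVec_surjective v
  have hl0 : 0 ≠ l := by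
    rintro rfl
    exact hv0 digitsVec_zero
  have mem_box : ∀ n, (∀ i (t : Fin m), t.val < d i → (C i *ᵥ digitsVec m n) t = 0) →
      ∀ i, 0 ≤ phiMap m (C i *ᵥ digitsVec m n) ∧
        phiMap m (C i *ᵥ digitsVec m n) < 1 / 2 ^ d i :=
    fun n hn i => ⟨phiMap_nonneg _, phiMap_lt_of_forall_lt_eq_zero (hn i)⟩
  have hbox := hnet d (by simpa using hd) 0 fun i => by positivity
  simp only [digitalNet, Multiset.countP_map, pow_zero, Pi.zero_apply, Nat.cast_zero, zero_div,
    zero_add] at hbox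
  rw [← Multiset.countP_eq_card_filter] at hbox
  refine (one_lt_countP_range hl0 (by positivity) hl (mem_box 0 ?_) (mem_box l hv)).ne' hbox
  simp [digitsVec_zero]

theorem IsNet.iSup_span_rowSet_eq_top (hnet : IsNet 0 m s (digitalNet m s C))
    {d : Fin s → ℕ} (hd : ∑ i, d i = m) :
    ⨆ i, span (ZMod 2) (rowSet (C i) (d i)) = ⊤ := by
  rw [← span_iUnion, ← dualAnnihilator_eq_bot_iff, eq_bot_iff]
  intro f hf
  rw [mem_dualAnnihilator] at hf
  set v : Fin m → ZMod 2 := fun k => f fun j => if k = j then 1 else 0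
  have hfv : ∀ w, f w = w ⬝ᵥ v := fun w => LinearMap.pi_apply_eq_sum_univ f w
  have hv : v = 0 := hnet.eq_zero_of_mulVec_apply_eq_zero hd fun i t ht => by
    rw [mulVec, ← hfv]
    exact hf _ (subset_span (Set.mem_iUnion.2 ⟨i, t, ht, rfl⟩))
  rw [mem_bot]
  ext w
  simp [hfv, hv]

end Net

section Rows

variable {m : ℕ}

lemma rowSet_succ (M : Matrix (Fin m) (Fin m) (ZMod 2)) {n : ℕ} (hn : n < m) :
    rowSet M (n + 1) = insert (M ⟨n, hn⟩) (rowSet M n) := by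
  ext x
  simp only [rowSet, Set.mem_ofPred_eq, Set.mem_insert_iff]
  constructor
  · rintro ⟨r, hr, rfl⟩
    rcases Nat.lt_succ_iff_lt_or_eq.1 hr with hr | hr
    · exact Or.inr ⟨r, hr, rfl⟩
    · exact Or.inl (congrArg M (Fin.ext hr))
  · rintro (rfl | ⟨r, hr, rfl⟩)
    · exact ⟨_, Nat.lt_succ_self n, rfl⟩
    · exact ⟨r, hr.trans (Nat.lt_succ_self n), rfl⟩

lemma finrank_span_rowSet_le (M : Matrix (Fin m) (Fin m) (ZMod 2)) (n : ℕ) :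
    finrank (ZMod 2) (span (ZMod 2) (rowSet M n)) ≤ n := by
  have hrow : rowSet M n =
      ↑(({r | r.val < n} : Finset (Fin m)).image fun r => (M r : Fin m → ZMod 2)) := by
    ext x
    simp [rowSet, eq_comm]
  rw [hrow]
  calc _ ≤ _ := finrank_span_finset_le_card _
    _ ≤ #({r | r.val < n} : Finset (Fin m)) := card_image_le
    _ ≤ n := by
      rw [Fin.card_filter_val_lt]
      exact min_le_right _ _

end Rows

section Vsub

variable {m : ℕ} {A B C : Matrix (Fin m) (Fin m) (ZMod 2)} {i j : ℕ}

lemma Vsub_eq_sup :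
    Vsub A B C i j = span (ZMod 2) (rowSet A i) ⊔ span (ZMod 2) (rowSet B (m - i - j - 1)) ⊔
      span (ZMod 2) (rowSet C j) := by
  rw [Vsub, span_union, span_union]

lemma finrank_Vsub_le :
    finrank (ZMod 2) (Vsub A B C i j) ≤ i + (m - i - j - 1) + j := by
  rw [Vsub_eq_sup]
  refine (finrank_add_le_finrank_add_finrank _ _).trans (add_le_add ?_ (finrank_span_rowSet_le _ _))
  exact (finrank_add_le_finrank_add_finrank _ _).trans
    (add_le_add (finrank_span_rowSet_le _ _) (finrank_span_rowSet_le _ _))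

lemma span_singleton_sup_Vsub_eq_top (hnet : IsNet 0 m 3 (digitalNet m 3 ![A, B, C]))
    (hij : i + j < m) :
    span (ZMod 2) {B ⟨m - i - j - 1, by omega⟩} ⊔ Vsub A B C i j = ⊤ := by
  have htop := hnet.iSup_span_rowSet_eq_top (d := ![i, m - i - j, j])
    (by simp [Fin.sum_univ_three]; omega)
  rw [iSup_fin_three] at htop
  simp only [Matrix.cons_val_zero, Matrix.cons_val_one, Matrix.cons_val_two, Matrix.head_cons,
    Matrix.tail_cons] at htop
  rw [show m - i - j = m - i - j - 1 + 1 by omega, rowSet_succ B (by omega), span_insert] at htop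
  rw [Vsub_eq_sup, ← htop]
  ac_rfl

lemma finrank_Vsub_add_one (hnet : IsNet 0 m 3 (digitalNet m 3 ![A, B, C])) (hij : i + j < m) :
    finrank (ZMod 2) (Vsub A B C i j) + 1 = m := by
  have hle : finrank (ZMod 2) (Vsub A B C i j) ≤ i + (m - i - j - 1) + j := finrank_Vsub_le
  have hge : m ≤ 1 + finrank (ZMod 2) (Vsub A B C i j) := by
    calc m = finrank (ZMod 2) (⊤ : Submodule (ZMod 2) (Fin m → ZMod 2)) := by simp
      _ ≤ _ := (span_singleton_sup_Vsub_eq_top hnet hij).symm ▸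
          finrank_add_le_finrank_add_finrank _ _
      _ ≤ 1 + finrank (ZMod 2) (Vsub A B C i j) := by
        gcongr
        exact (finrank_span_le_card _).trans (by simp)
  omega

lemma row_notMem_Vsub (hnet : IsNet 0 m 3 (digitalNet m 3 ![A, B, C])) (hij : i + j < m) :
    B ⟨m - i - j - 1, by omega⟩ ∉ Vsub A B C i j := by
  intro hb
  have htop := span_singleton_sup_Vsub_eq_top hnet hij
  rw [sup_eq_right.2 ((span_singleton_le_iff_mem _ _).2 hb)] at htop
  have := finrank_Vsub_add_one hnet hij
  rw [htop, finrank_top, finrank_fin_fun] at this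
  omega

lemma row_mem_Vsub {i' : ℕ} (hi : i < i') (hi' : i' + j < m) :
    B ⟨m - i' - j - 1, by omega⟩ ∈ Vsub A B C i j :=
  subset_span (Or.inl (Or.inr ⟨_, by simp only; omega, rfl⟩))

end Vsub

theorem finrank_finsetInf_add_card {K E ι : Type*} [DivisionRing K] [AddCommGroup E]
    [Module K E] [FiniteDimensional K E] [LinearOrder ι] (V : ι → Submodule K E) (b : ι → E)
    (S : Finset ι) (hV : ∀ i ∈ S, finrank K (V i) + 1 = finrank K E)
    (hbV : ∀ i ∈ S, b i ∉ V i) (hb : ∀ i ∈ S, ∀ i' ∈ S, i' < i → b i ∈ V i') :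
    finrank K ↥(S.inf V) + #S = finrank K E := by
  induction S using Finset.induction_on_max with
  | empty => rw [inf_empty, finrank_top, card_empty, add_zero]
  | insert a S haS ih =>
    have ha : a ∈ insert a S := mem_insert_self a S
    have hW := ih (fun i hi => hV i (mem_insert_of_mem hi))
      (fun i hi => hbV i (mem_insert_of_mem hi))
      fun i hi i' hi' => hb i (mem_insert_of_mem hi) i' (mem_insert_of_mem hi')
    have hbW : b a ∈ S.inf V :=
      mem_finsetInf.2 fun i hi => hb a ha i (mem_insert_of_mem hi) (haS i hi)
    have hlt : V a < V a ⊔ S.inf V :=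
      lt_of_le_of_ne le_sup_left fun h => hbV a ha (h ▸ mem_sup_right hbW)
    have hsup := finrank_lt_finrank_of_lt hlt
    have hle := Submodule.finrank_le (V a ⊔ S.inf V)
    have hdim := finrank_sup_add_finrank_inf_eq (V a) (S.inf V)
    have hVa := hV a ha
    rw [inf_insert, card_insert_of_notMem fun h => (haS a h).false]
    omega

theorem stmt13_general (m : ℕ) (A B C : Matrix (Fin m) (Fin m) (ZMod 2))
    (hnet : IsNet 0 m 3 (digitalNet m 3 ![A, B, C]))
    (j k : ℕ) (hk2 : k ≤ m - j)
    (idx : Fin k → ℕ) (hmono : StrictMono idx) (hub : ∀ l, idx l ≤ m - 1 - j) :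
    Module.finrank (ZMod 2) ↥(⨅ l : Fin k, Vsub A B C (idx l) j) = m - k := by
  have hidx : ∀ l, idx l + j < m := fun l => by
    have := hub l
    have := l.isLt
    omega
  have key := finrank_finsetInf_add_card (fun l => Vsub A B C (idx l) j)
    (fun l => B ⟨m - idx l - j - 1, by have := hidx l; omega⟩) univ
    (fun l _ => (finrank_Vsub_add_one hnet (hidx l)).trans (finrank_fin_fun _).symm)
    (fun l _ => row_notMem_Vsub hnet (hidx l))
    fun l _ l' _ hl => row_mem_Vsub (hmono hl) (hidx l)
  rw [inf_univ_eq_iInf, card_univ, Fintype.card_fin, finrank_fin_fun] at key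
  omega

theorem stmt13 (m : ℕ) (hm : 1 ≤ m) (A B C : Matrix (Fin m) (Fin m) (ZMod 2))
    (hnet : IsNet 0 m 3 (digitalNet m 3 ![A, B, C]))
    (j k : ℕ) (hj : j ≤ m - 1) (hk1 : 1 ≤ k) (hk2 : k ≤ m - j)
    (idx : Fin k → ℕ) (hmono : StrictMono idx) (hub : ∀ l, idx l ≤ m - 1 - j) :
    Module.finrank (ZMod 2) ↥(⨅ l : Fin k, Vsub A B C (idx l) j) = m - k :=
  stmt13_general m A B C hnet j k hk2 idx hmono hub
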